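/- arXiv:1512.02161 — 2 statements merged into one kernel-verified Lean document; each statement's English description precedes it below -/
import Mathlib

section
/- Let n ≥ 1 and let d_1 ≤ d_2 ≤ ... ≤ d_k be positive integers with d_1 + ... + d_k = n(n+1)/2. Suppose that every bipartite graph G with parts X and Y whose X-degree sequence (the degrees of the vertices of X in nondecreasing order) equals (d_1,...,d_k) admits a partition of its edge set into subgraphs F_1,...,F_n where F_i has exactly i edges and each F_i is a star forest with centers in X (the decomposition need not be ascending). Then ∑_{i=0}^{t} d_{k-i} ≥ ∑_{i=0}^{t} (n-i) for every t with 0 ≤ t ≤ k-1. -/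
/-!
Apply the hypothesis to the reduced graph, in which the `i`-th vertex of `X` is joined to the
first `d i` vertices of `Y`, and keep the `t + 1` largest star forests of the decomposition:
together they have `∑_{i ≤ t} (n - i)` edges. A vertex `y` of `Y` meets at most one edge of
each star forest, and at most as many edges as there are `X`-vertices of degree `> y`; as the
degrees are sorted, this is at most the number of `i ≤ t` with `d (k - i) > y`. Summing over
`y` gives `∑_{i ≤ t} d (k - i)`.
-/

open Finset

/-- The degree in the bipartite edge set `E` of a vertex `x` of the part `X = Fin k`. -/
def Xdeg {k m : ℕ} (E : Finset (Fin k × Fin m)) (x : Fin k) : ℕ :=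
  (E.filter fun e => e.1 = x).card

/-- The degree in the bipartite edge set `E` of a vertex `y` of the part `Y = Fin m`. -/
def Ydeg {k m : ℕ} (E : Finset (Fin k × Fin m)) (y : Fin m) : ℕ :=
  (E.filter fun e => e.2 = y).card

/-- A star forest with centers in `X`: every vertex of `Y` has degree at most one. -/
def IsStarForest {k m : ℕ} (F : Finset (Fin k × Fin m)) : Prop :=
  ∀ y : Fin m, Ydeg F y ≤ 1

/-- The simple graph on the vertex set `Fin k ⊕ Fin m` determined by a set of
bipartite edges. -/
def toGraph {k m : ℕ} (F : Finset (Fin k × Fin m)) : SimpleGraph (Fin k ⊕ Fin m) where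
  Adj u v := (∃ x y, u = Sum.inl x ∧ v = Sum.inr y ∧ (x, y) ∈ F) ∨
             (∃ x y, v = Sum.inl x ∧ u = Sum.inr y ∧ (x, y) ∈ F)
  symm := ⟨fun _ _ h => Or.symm h⟩
  loopless := by
    constructor
    rintro u (⟨x, y, rfl, h, -⟩ | ⟨x, y, rfl, h, -⟩) <;> cases h

/-- `F` is isomorphic to a subgraph of `F'`: there is an injective map of vertices
carrying edges to edges. -/
def IsoToSubgraph {k m k' m' : ℕ} (F : Finset (Fin k × Fin m))
    (F' : Finset (Fin k' × Fin m')) : Prop :=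
  ∃ f : Fin k ⊕ Fin m → Fin k' ⊕ Fin m',
    Function.Injective f ∧ ∀ u v, (toGraph F).Adj u v → (toGraph F').Adj (f u) (f v)

/-- `c ⪯ c'` : after reordering the components of each vector in nondecreasing order,
each component of `c` is at most the corresponding component of `c'`. -/
def Prec {k : ℕ} (c c' : Fin k → ℕ) : Prop :=
  ∀ i : Fin k, c (Tuple.sort c i) ≤ c' (Tuple.sort c' i)

/-- A star-forest ascending subgraph decomposition of the edge set `E`:
the `F i` partition `E`, `F i` has `i + 1` edges (`1`-based: `i` edges),
every `F i` is a star forest with centers in `X`, and each `F i` is isomorphic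
to a subgraph of the next one. -/
def StarForestASD {k m n : ℕ} (E : Finset (Fin k × Fin m))
    (F : Fin n → Finset (Fin k × Fin m)) : Prop :=
  (∀ i j, i ≠ j → Disjoint (F i) (F j)) ∧
  Finset.univ.biUnion F = E ∧
  (∀ i, (F i).card = (i : ℕ) + 1) ∧
  (∀ i, IsStarForest (F i)) ∧
  ∀ j : ℕ, (h : j + 1 < n) → IsoToSubgraph (F ⟨j, Nat.lt_of_succ_lt h⟩) (F ⟨j + 1, h⟩)

/-- The reduced bipartite graph with (1-based) degree sequence `d 1 ≤ ⋯ ≤ d k`: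
`x i` is adjacent exactly to `y 1, …, y (d i)`. -/
def reducedEdges (k : ℕ) (d : ℕ → ℕ) : Finset (Fin k × Fin (d k)) :=
  Finset.univ.filter fun e => (e.2 : ℕ) + 1 ≤ d ((e.1 : ℕ) + 1)

/-- The columns of `A` satisfy `A_1 ⪯ A_2 ⪯ ⋯ ⪯ A_n`. -/
def AscendingCols {k n : ℕ} (A : Matrix (Fin k) (Fin n) ℕ) : Prop :=
  ∀ j : ℕ, (h : j + 1 < n) →
    Prec (fun i => A i ⟨j, Nat.lt_of_succ_lt h⟩) (fun i => A i ⟨j + 1, h⟩)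

/-- A sequential coloring of the bipartite multigraph encoded by the matrix `A`:
the parallel edge class joining `x i` and `z j` receives the set `S i j` of colors,
the coloring is proper, and the edges at `x i` receive exactly colors `{1, …, d i}`. -/
def SeqColoring {k n : ℕ} (A : Matrix (Fin k) (Fin n) ℕ) (d : Fin k → ℕ)
    (S : Fin k → Fin n → Finset ℕ) : Prop :=
  (∀ i j, (S i j).card = A i j) ∧
  (∀ j : Fin n, ∀ i i' : Fin k, i ≠ i' → Disjoint (S i j) (S i' j)) ∧
  (∀ i : Fin k, ∀ j j' : Fin n, j ≠ j' → Disjoint (S i j) (S i j')) ∧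
  (∀ i : Fin k, Finset.univ.biUnion (fun j => S i j) = Finset.Icc 1 (d i))

section StarForests

variable {k m : ℕ}

lemma card_eq_sum_Ydeg (E : Finset (Fin k × Fin m)) : E.card = ∑ y, Ydeg E y :=
  card_eq_sum_card_fiberwise fun _ _ => mem_univ _

lemma Ydeg_mono {H E : Finset (Fin k × Fin m)} (h : H ⊆ E) (y : Fin m) :
    Ydeg H y ≤ Ydeg E y :=
  card_le_card (filter_subset_filter _ h)

lemma Ydeg_biUnion_le_card {ι : Type*} (T : Finset ι) {F : ι → Finset (Fin k × Fin m)}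
    (hF : ∀ j ∈ T, IsStarForest (F j)) (y : Fin m) : Ydeg (T.biUnion F) y ≤ T.card := by
  rw [Ydeg, filter_biUnion, card_eq_sum_ones T]
  exact card_biUnion_le.trans (sum_le_sum fun j hj => hF j hj y)

lemma card_biUnion_le_sum_min {ι : Type*} (T : Finset ι) {E : Finset (Fin k × Fin m)}
    {F : ι → Finset (Fin k × Fin m)} (hE : ∀ j ∈ T, F j ⊆ E)
    (hF : ∀ j ∈ T, IsStarForest (F j)) :
    (T.biUnion F).card ≤ ∑ y, min T.card (Ydeg E y) := by
  rw [card_eq_sum_Ydeg]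
  exact sum_le_sum fun y _ =>
    le_min (Ydeg_biUnion_le_card T hF y) (Ydeg_mono (biUnion_subset.2 hE) y)

end StarForests

section ReducedGraph

variable {k : ℕ} {d : ℕ → ℕ}

lemma Xdeg_reducedEdges (hd : ∀ i, 1 ≤ i → i ≤ k → d i ≤ d k) (x : Fin k) :
    Xdeg (reducedEdges k d) x = d (x + 1) := by
  have hfiber : (reducedEdges k d).filter (fun e => e.1 = x)
      = ({x} : Finset (Fin k)) ×ˢ univ.filter (fun y : Fin (d k) => (y : ℕ) < d (x + 1)) := by
    ext ⟨a, b⟩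
    simp only [reducedEdges, mem_filter, mem_univ, true_and, mem_product, mem_singleton]
    exact ⟨fun ⟨hb, ha⟩ => ⟨ha, ha ▸ hb⟩, fun ⟨ha, hb⟩ => ⟨ha ▸ hb, ha⟩⟩
  rw [Xdeg, hfiber, card_product, card_singleton, one_mul, Fin.card_filter_val_lt,
    min_eq_right (hd _ (by omega) x.isLt)]

lemma Ydeg_reducedEdges (y : Fin (d k)) :
    Ydeg (reducedEdges k d) y = #{x : Fin k | (y : ℕ) < d (x + 1)} := by
  have hfiber : (reducedEdges k d).filter (fun e => e.2 = y)
      = univ.filter (fun x : Fin k => (y : ℕ) < d (x + 1)) ×ˢ ({y} : Finset (Fin (d k))) := by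
    ext ⟨a, b⟩
    simp only [reducedEdges, mem_filter, mem_univ, true_and, mem_product, mem_singleton]
    exact ⟨fun ⟨ha, hb⟩ => ⟨hb ▸ ha, hb⟩, fun ⟨ha, hb⟩ => ⟨hb ▸ ha, hb⟩⟩
  rw [Ydeg, hfiber, card_product, card_singleton, mul_one]

/-- As `d` is nondecreasing, the `X`-vertices of degree `> a` form a final segment. -/
lemma min_card_le_card_filter_top (hmono : ∀ i j, 1 ≤ i → i ≤ j → j ≤ k → d i ≤ d j)
    (t a : ℕ) :
    min (t + 1) #{x : Fin k | a < d (x + 1)} ≤ #{i ∈ range (t + 1) | a < d (k - i)} := by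
  set c := #{x : Fin k | a < d (x + 1)}
  suffices range (min (t + 1) c) ⊆ {i ∈ range (t + 1) | a < d (k - i)} by
    simpa using card_le_card this
  intro i hi
  rw [mem_range, lt_min_iff] at hi
  refine mem_filter.2 ⟨mem_range.2 hi.1, ?_⟩
  by_contra! hle
  have hc : c ≤ i :=
    calc c ≤ #(range i) := card_le_card_of_injOn (fun x => k - 1 - x)
          (fun x hx => by
            have hax : a < d (x + 1) := (mem_filter.1 hx).2
            have : k - i < x + 1 := by
              by_contra! h
              have := hmono _ _ (by omega) h (by omega)
              omega
            simp only [coe_range, Set.mem_Iio]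
            omega)
          (fun x _ y _ h => Fin.ext (by simp only at h; omega))
      _ = i := card_range i
  omega

end ReducedGraph

def lastIndices (n s : ℕ) : Finset (Fin n) :=
  univ.filter fun j => n ≤ (j : ℕ) + s

lemma card_lastIndices_le (n s : ℕ) : #(lastIndices n s) ≤ s :=
  calc #(lastIndices n s) ≤ #(range s) :=
        card_le_card_of_injOn (fun j => n - 1 - j)
          (fun j hj => by simp [lastIndices] at hj ⊢; omega)
          (fun a _ b _ h => Fin.ext (by simp only at h; omega))
    _ = s := card_range s

lemma sum_lastIndices_succ (n s : ℕ) :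
    ∑ j ∈ lastIndices n s, ((j : ℕ) + 1) = ∑ i ∈ range s, (n - i) := by
  rw [lastIndices, sum_filter, Fin.sum_univ_eq_sum_range (fun j => if n ≤ j + s then j + 1 else 0),
    ← sum_range_reflect]
  calc ∑ j ∈ range n, (if n ≤ n - 1 - j + s then n - 1 - j + 1 else 0)
      = ∑ i ∈ range n, if i ∈ range s then n - i else 0 :=
        sum_congr rfl fun i hi => by simp only [mem_range] at hi ⊢; split_ifs <;> omega
    _ = ∑ i ∈ range s, if i ∈ range n then n - i else 0 := by
        rw [sum_ite_mem, sum_ite_mem, inter_comm]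
    _ = ∑ i ∈ range s, (n - i) :=
        sum_congr rfl fun i _ => by simp only [mem_range]; split_ifs <;> omega

theorem statement1_general (n k : ℕ) (d : ℕ → ℕ)
    (hmono : ∀ i j, 1 ≤ i → i ≤ j → j ≤ k → d i ≤ d j)
    (hdecomp : ∀ (m : ℕ) (E : Finset (Fin k × Fin m)),
      (∃ σ : Equiv.Perm (Fin k), ∀ i : Fin k, Xdeg E (σ i) = d ((i : ℕ) + 1)) →
      ∃ F : Fin n → Finset (Fin k × Fin m),
        (∀ i j, i ≠ j → Disjoint (F i) (F j)) ∧
        Finset.univ.biUnion F = E ∧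
        (∀ i, (F i).card = (i : ℕ) + 1) ∧
        (∀ i, IsStarForest (F i))) :
    ∀ t : ℕ, t ≤ k - 1 →
      ∑ i ∈ Finset.range (t + 1), (n - i) ≤ ∑ i ∈ Finset.range (t + 1), d (k - i) := by
  intro t _
  obtain ⟨F, hdisj, hunion, hcard, hstar⟩ := hdecomp (d k) (reducedEdges k d)
    ⟨Equiv.refl _, Xdeg_reducedEdges fun i h1 h2 => hmono i k h1 h2 le_rfl⟩
  set T := lastIndices n (t + 1)
  calc ∑ i ∈ range (t + 1), (n - i) = ∑ j ∈ T, (F j).card := by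
        rw [← sum_lastIndices_succ]; exact sum_congr rfl fun j _ => (hcard j).symm
    _ = (T.biUnion F).card := (card_biUnion fun i _ j _ hij => hdisj i j hij).symm
    _ ≤ ∑ y, min T.card (Ydeg (reducedEdges k d) y) :=
        card_biUnion_le_sum_min T (fun j _ => hunion ▸ subset_biUnion_of_mem F (mem_univ j))
          fun j _ => hstar j
    _ ≤ ∑ y : Fin (d k), #{i ∈ range (t + 1) | (y : ℕ) < d (k - i)} :=
        sum_le_sum fun y _ => by
          rw [Ydeg_reducedEdges]
          exact (min_le_min_right _ (card_lastIndices_le n (t + 1))).trans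
            (min_card_le_card_filter_top hmono t y)
    _ = ∑ i ∈ range (t + 1), #{y : Fin (d k) | (y : ℕ) < d (k - i)} := by
        simp only [card_filter]; exact sum_comm
    _ ≤ ∑ i ∈ range (t + 1), d (k - i) :=
        sum_le_sum fun i _ => Fin.card_filter_val_lt.trans_le (min_le_right _ _)

/-- **Lemma 2 (necessary condition).** If every bipartite graph whose `X`-degree
sequence is `d 1 ≤ ⋯ ≤ d k` admits a decomposition into star forests `F 1, …, F n`
with centers in `X`, where `F i` has `i` edges, then
`∑_{i=0}^{t} d (k-i) ≥ ∑_{i=0}^{t} (n-i)` for every `0 ≤ t ≤ k-1`. -/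
theorem statement1 (n k : ℕ) (hn : 1 ≤ n) (d : ℕ → ℕ)
    (hpos : ∀ i, 1 ≤ i → i ≤ k → 1 ≤ d i)
    (hmono : ∀ i j, 1 ≤ i → i ≤ j → j ≤ k → d i ≤ d j)
    (hsum : ∑ i ∈ Finset.Icc 1 k, d i = n * (n + 1) / 2)
    (hdecomp : ∀ (m : ℕ) (E : Finset (Fin k × Fin m)),
      (∃ σ : Equiv.Perm (Fin k), ∀ i : Fin k, Xdeg E (σ i) = d ((i : ℕ) + 1)) →
      ∃ F : Fin n → Finset (Fin k × Fin m),
        (∀ i j, i ≠ j → Disjoint (F i) (F j)) ∧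
        Finset.univ.biUnion F = E ∧
        (∀ i, (F i).card = (i : ℕ) + 1) ∧
        (∀ i, IsStarForest (F i))) :
    ∀ t : ℕ, t ≤ k - 1 →
      ∑ i ∈ Finset.range (t + 1), (n - i) ≤ ∑ i ∈ Finset.range (t + 1), d (k - i) :=
  statement1_general n k d hmono hdecomp
end

section
/- Let n ≥ 1, let d_1 ≤ ... ≤ d_k be positive integers with d_1 + ... + d_k = n(n+1)/2, and let G be the reduced bipartite graph with degree sequence (d_1,...,d_k). Suppose there exists an ascending matrix A ∈ N((d_1,...,d_k), (1,2,...,n)) together with finite sets S_{ij} ⊆ {1,2,3,...} with |S_{ij}| = a_{ij} for all 1 ≤ i ≤ k and 1 ≤ j ≤ n, such that for each fixed j the sets S_{1j},...,S_{kj} are pairwise disjoint, and for each fixed i the sets S_{i1},...,S_{in} are pairwise disjoint with union exactly {1,...,d_i}. Then G admits a star-forest ascending subgraph decomposition with the centers of the stars in X. -/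
/-!
Put the edge `x_i y_c` into `F_j` exactly when `c ∈ S_ij`. Properness of the colouring at `z_j`
makes `F_j` a star forest centred in `X`, properness at `x_i` makes the `F_j` disjoint, and the
colours at `x_i` being `{1, …, d_i}` makes them cover `G`. The star of `F_j` at `x_i` has `a_ij`
leaves, so `|F_j| = j`; and `A_j ⪯ A_{j+1}` gives a bijection of the centres under which no star
shrinks, so each star of `F_j` embeds into its partner in `F_{j+1}`.
-/

open Finset

lemma Finset.exists_mapsTo_injOn_of_card_le {α : Type*} {s t : Finset α} (h : #s ≤ #t) :
    ∃ f : α → α, Set.MapsTo f s t ∧ Set.InjOn f s := by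
  obtain rfl | ⟨a, -⟩ := s.eq_empty_or_nonempty
  · exact ⟨id, by simp [Set.MapsTo], by simp⟩
  have : Nonempty α := ⟨a⟩
  exact s.finite_toSet.exists_injOn_of_encard_le (t := (t : Set α))
    (by rwa [Set.encard_coe_eq_coe_finsetCard, Set.encard_coe_eq_coe_finsetCard, Nat.cast_le])

lemma Set.InjOn.exists_injective_eqOn {α : Type*} [Fintype α] {s : Set α} {f : α → α}
    (hf : s.InjOn f) : ∃ g : α → α, Function.Injective g ∧ s.EqOn g f := by
  classical
  obtain ⟨g, hg⟩ := Set.MapsTo.exists_equiv_extend_of_card_eq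
    (t := Finset.univ) (by simp) (by simp [Set.MapsTo]) hf
  exact ⟨fun a => g a, Subtype.val_injective.comp g.injective, hg⟩

lemma Prec.exists_perm_le {k : ℕ} {c c' : Fin k → ℕ} (h : Prec c c') :
    ∃ σ : Equiv.Perm (Fin k), ∀ i, c i ≤ c' (σ i) :=
  ⟨(Tuple.sort c).symm.trans (Tuple.sort c'), fun i => by
    simpa using h ((Tuple.sort c).symm i)⟩

section BipartiteEdges

variable {k m : ℕ}

def nbhd (F : Finset (Fin k × Fin m)) (x : Fin k) : Finset (Fin m) :=
  univ.filter fun y => (x, y) ∈ F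

@[simp]
lemma mem_nbhd {F : Finset (Fin k × Fin m)} {x : Fin k} {y : Fin m} :
    y ∈ nbhd F x ↔ (x, y) ∈ F := by
  simp [nbhd]

lemma card_nbhd (F : Finset (Fin k × Fin m)) (x : Fin k) : #(nbhd F x) = Xdeg F x :=
  card_nbij' (fun y => (x, y)) Prod.snd (fun y hy => by simpa using hy)
    (fun e he => by obtain ⟨he, rfl⟩ := mem_filter.1 he; simpa using he) (fun _ _ => rfl)
    (fun e he => by obtain ⟨-, rfl⟩ := mem_filter.1 he; rfl)

lemma card_eq_sum_xdeg (F : Finset (Fin k × Fin m)) : #F = ∑ x, Xdeg F x :=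
  card_eq_sum_card_fiberwise fun e _ => mem_univ e.1

lemma IsStarForest.eq_of_mem {F : Finset (Fin k × Fin m)} (hF : IsStarForest F)
    {x x' : Fin k} {y : Fin m} (h : (x, y) ∈ F) (h' : (x', y) ∈ F) : x = x' :=
  congrArg Prod.fst <| card_le_one.1 (hF y) (x, y) (by simp [h]) (x', y) (by simp [h'])

lemma IsoToSubgraph.of_injective {k' m' : ℕ} {F : Finset (Fin k × Fin m)}
    {F' : Finset (Fin k' × Fin m')} {σ : Fin k → Fin k'} {π : Fin m → Fin m'}
    (hσ : Function.Injective σ) (hπ : Function.Injective π)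
    (h : ∀ e ∈ F, (σ e.1, π e.2) ∈ F') : IsoToSubgraph F F' := by
  refine ⟨Sum.map σ π, hσ.sumMap hπ, ?_⟩
  rintro _ _ (⟨x, y, rfl, rfl, hxy⟩ | ⟨x, y, rfl, rfl, hxy⟩)
  · exact Or.inl ⟨σ x, π y, rfl, rfl, h _ hxy⟩
  · exact Or.inr ⟨σ x, π y, rfl, rfl, h _ hxy⟩

theorem IsStarForest.isoToSubgraph_of_xdeg_le {k' : ℕ} {F : Finset (Fin k × Fin m)}
    {F' : Finset (Fin k' × Fin m)} (hF : IsStarForest F) (hF' : IsStarForest F')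
    {σ : Fin k → Fin k'} (hσ : Function.Injective σ)
    (hdeg : ∀ x, Xdeg F x ≤ Xdeg F' (σ x)) : IsoToSubgraph F F' := by
  classical
  choose f hf_maps hf_inj using fun x => Finset.exists_mapsTo_injOn_of_card_le <|
    (card_nbhd F x).trans_le <| (hdeg x).trans_eq (card_nbhd F' (σ x)).symm
  -- a leaf `y` is moved by the injection chosen for its unique centre
  let π₀ : Fin m → Fin m := fun y => if h : ∃ x, (x, y) ∈ F then f h.choose y else y
  have hπ₀ : ∀ e ∈ F, π₀ e.2 = f e.1 e.2 := by
    intro e he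
    have h : ∃ x, (x, e.2) ∈ F := ⟨e.1, he⟩
    simp only [π₀, dif_pos h, hF.eq_of_mem h.choose_spec he]
  have hmem : ∀ e ∈ F, (σ e.1, π₀ e.2) ∈ F' := fun e he => by
    rw [hπ₀ e he, ← mem_nbhd]
    exact hf_maps e.1 (mem_nbhd.2 he)
  have hinj : (Prod.snd '' (F : Set (Fin k × Fin m))).InjOn π₀ := by
    rintro _ ⟨e, he, rfl⟩ _ ⟨e', he', rfl⟩ h
    have hcentre : e.1 = e'.1 := hσ (hF'.eq_of_mem (hmem e he) (h ▸ hmem e' he'))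
    rw [hπ₀ e he, hπ₀ e' he', hcentre] at h
    exact hf_inj e'.1 (mem_nbhd.2 (hcentre ▸ he)) (mem_nbhd.2 he') h
  obtain ⟨π, hπ, hππ₀⟩ := hinj.exists_injective_eqOn
  exact .of_injective hσ hπ fun e he => hππ₀ ⟨e, he, rfl⟩ ▸ hmem e he

end BipartiteEdges

section ForestOfColoring

variable {k n m : ℕ} (S : Fin k → Fin n → Finset ℕ)

/-- `F_j = {x_i y_c | c ∈ S_ij}`; colours are `1`-based while the vertex `y_c` is `c - 1 : Fin m`. -/
def forestOf (j : Fin n) : Finset (Fin k × Fin m) :=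
  univ.filter fun e => (e.2 : ℕ) + 1 ∈ S e.1 j

@[simp]
lemma mem_forestOf {j : Fin n} {e : Fin k × Fin m} :
    e ∈ forestOf S j ↔ (e.2 : ℕ) + 1 ∈ S e.1 j := by
  simp [forestOf]

lemma xdeg_forestOf {j : Fin n} (x : Fin k) (hS : S x j ⊆ Icc 1 m) :
    Xdeg (forestOf S j : Finset (Fin k × Fin m)) x = #(S x j) := by
  rw [← card_nbhd]
  refine card_nbij (fun y => (y : ℕ) + 1) (fun y hy => by simpa using hy)
    (fun y _ y' _ h => Fin.ext (Nat.succ_injective h)) fun c hc => ?_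
  have hc' := mem_Icc.1 (hS hc)
  exact ⟨⟨c - 1, by omega⟩, by simpa [Nat.sub_add_cancel hc'.1] using hc, by simp; omega⟩

lemma isStarForest_forestOf {j : Fin n}
    (hS : ∀ i i', i ≠ i' → Disjoint (S i j) (S i' j)) :
    IsStarForest (forestOf S j : Finset (Fin k × Fin m)) := by
  intro y
  refine card_le_one.2 fun e he e' he' => ?_
  simp only [mem_filter, mem_forestOf] at he he'
  have hcentre : e.1 = e'.1 := by
    by_contra hne
    exact disjoint_left.1 (hS _ _ hne) he.1 (by rw [he.2, ← he'.2]; exact he'.1)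
  exact Prod.ext hcentre (he.2.trans he'.2.symm)

lemma disjoint_forestOf {j j' : Fin n} (hS : ∀ i, Disjoint (S i j) (S i j')) :
    Disjoint (forestOf S j : Finset (Fin k × Fin m)) (forestOf S j') :=
  disjoint_left.2 fun e he he' =>
    disjoint_left.1 (hS e.1) (mem_forestOf S |>.1 he) (mem_forestOf S |>.1 he')

lemma biUnion_forestOf {d : ℕ → ℕ}
    (hS : ∀ i : Fin k, univ.biUnion (S i) = Icc 1 (d ((i : ℕ) + 1))) :
    univ.biUnion (forestOf S) = reducedEdges k d := by
  ext e
  have := congrArg (((e.2 : ℕ) + 1) ∈ ·) (hS e.1)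
  simp only [mem_biUnion, mem_univ, true_and, mem_Icc] at this
  simp [reducedEdges, this]

end ForestOfColoring

theorem statement4_general (n k : ℕ) (d : ℕ → ℕ)
    (hmono : ∀ i j, 1 ≤ i → i ≤ j → j ≤ k → d i ≤ d j)
    (hmat : ∃ A : Matrix (Fin k) (Fin n) ℕ,
      (∀ i : Fin k, ∑ j, A i j = d ((i : ℕ) + 1)) ∧
      (∀ j : Fin n, ∑ i, A i j = (j : ℕ) + 1) ∧
      AscendingCols A ∧
      ∃ S : Fin k → Fin n → Finset ℕ,
        SeqColoring A (fun i => d ((i : ℕ) + 1)) S) :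
    ∃ F : Fin n → Finset (Fin k × Fin (d k)),
      StarForestASD (reducedEdges k d) F := by
  obtain ⟨A, -, hcol, hasc, S, hcard, hdisj_col, hdisj_row, hunion⟩ := hmat
  have hbound : ∀ i j, S i j ⊆ Icc 1 (d k) := fun i j c hc => by
    have hc := mem_Icc.1 (hunion i ▸ mem_biUnion.2 ⟨j, mem_univ j, hc⟩)
    exact mem_Icc.2 ⟨hc.1, hc.2.trans (hmono _ k (by omega) i.isLt le_rfl)⟩
  have hdeg : ∀ j x, Xdeg (forestOf S j : Finset (Fin k × Fin (d k))) x = A x j :=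
    fun j x => (xdeg_forestOf S x (hbound x j)).trans (hcard x j)
  refine ⟨forestOf S, fun j j' h => disjoint_forestOf S fun i => hdisj_row i j j' h,
    biUnion_forestOf S hunion, fun j => ?_, fun j => isStarForest_forestOf S (hdisj_col j),
    fun j h => ?_⟩
  · simp only [card_eq_sum_xdeg, hdeg, hcol]
  · obtain ⟨σ, hσ⟩ := (hasc j h).exists_perm_le
    exact (isStarForest_forestOf S (hdisj_col _)).isoToSubgraph_of_xdeg_le
      (isStarForest_forestOf S (hdisj_col _)) σ.injective (by simpa only [hdeg] using hσ)

/-- **Proposition (if direction).** If there is an ascending matrix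
`A ∈ N(d, (1,…,n))` whose associated bipartite multigraph admits a sequential
coloring for `X`, then the reduced bipartite graph with degree sequence
`d 1 ≤ ⋯ ≤ d k` has a star-forest ASD with centers in `X`. -/
theorem statement4 (n k : ℕ) (hn : 1 ≤ n) (d : ℕ → ℕ)
    (hpos : ∀ i, 1 ≤ i → i ≤ k → 1 ≤ d i)
    (hmono : ∀ i j, 1 ≤ i → i ≤ j → j ≤ k → d i ≤ d j)
    (hsum : ∑ i ∈ Finset.Icc 1 k, d i = n * (n + 1) / 2)
    (hmat : ∃ A : Matrix (Fin k) (Fin n) ℕ,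
      (∀ i : Fin k, ∑ j, A i j = d ((i : ℕ) + 1)) ∧
      (∀ j : Fin n, ∑ i, A i j = (j : ℕ) + 1) ∧
      AscendingCols A ∧
      ∃ S : Fin k → Fin n → Finset ℕ,
        SeqColoring A (fun i => d ((i : ℕ) + 1)) S) :
    ∃ F : Fin n → Finset (Fin k × Fin (d k)),
      StarForestASD (reducedEdges k d) F :=
  statement4_general n k d hmono hmat
end
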